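/- arXiv:math/0503506 — 2 statements merged into one kernel-verified Lean document; each statement's English description precedes it below -/
import Mathlib

section
/- There exists a constant c > 0 such that for every τ ≥ 1, every positive integer k, and every f ∈ C²_c(ℝ), one has c·τ^{-k}·‖f‖²_{L²} ≤ τ^{-k}‖y^k(∂_y - y)f‖²_{L²} + ‖(∂_y + y)f‖²_{L²}. -/
/-!
Write `v = f' - y f` and `u = f' + y f`, so that `(e^{-y²/2} f)' = e^{-y²/2} v` and
`(e^{y²/2} f)' = e^{y²/2} u`. Where `|y| ≥ 1` we have `|v| ≤ |y^k v|`, and `2 y f = u - v` gives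
`|f|² ≤ (|y^k v|² + |u|²) / 2` pointwise. Integrating the first identity from the left end of the
support up to `-1` and then the second from `-1` to `y ∈ [-1, 1]`, Cauchy–Schwarz bounds `|f(y)|²`
by a multiple of `‖y^k v‖² + ‖u‖²` independent of `k`. So `‖f‖² ≤ C (‖y^k v‖² + ‖u‖²)`, and
`τ^{-k} ≤ 1` does the rest.
-/

open MeasureTheory Set Filter

theorem sq_integral_mul_le_integral_sq_mul_integral_sq {α : Type*} [MeasurableSpace α]
    {μ : Measure α} {f g : α → ℝ} (hf : Integrable (fun x => f x ^ 2) μ)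
    (hg : Integrable (fun x => g x ^ 2) μ) (hfg : Integrable (fun x => f x * g x) μ) :
    (∫ x, f x * g x ∂μ) ^ 2 ≤ (∫ x, f x ^ 2 ∂μ) * ∫ x, g x ^ 2 ∂μ := by
  have hquad : ∀ s : ℝ, 0 ≤ (∫ x, f x ^ 2 ∂μ) * (s * s) + (-2 * ∫ x, f x * g x ∂μ) * s
      + ∫ x, g x ^ 2 ∂μ := fun s =>
    calc 0 ≤ ∫ x, (s * f x - g x) ^ 2 ∂μ := integral_nonneg fun x => sq_nonneg _
      _ = ∫ x, ((s * s) * f x ^ 2 + (-2 * s) * (f x * g x) + g x ^ 2) ∂μ := by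
          congr 1; ext x; ring
      _ = _ := by
          rw [integral_add _ hg, integral_add (hf.const_mul _) (hfg.const_mul _),
            integral_const_mul, integral_const_mul]
          · ring
          · exact (hf.const_mul _).add (hfg.const_mul _)
  have := discrim_le_zero hquad
  rw [discrim] at this
  linarith

theorem norm_sub_sq_le_of_hasDerivAt_smul {E : Type*} [NormedAddCommGroup E] [NormedSpace ℝ E]
    [CompleteSpace E] {g h : ℝ → E} {w : ℝ → ℝ} {a b : ℝ} (hab : a ≤ b) (hw : Continuous w)
    (hh : Continuous h)
    (hg : ∀ t ∈ Icc a b, HasDerivAt g (w t • h t) t) :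
    ‖g b - g a‖ ^ 2 ≤ (∫ t in a..b, w t ^ 2) * ∫ t in a..b, ‖h t‖ ^ 2 := by
  have hftc : ∫ t in a..b, w t • h t = g b - g a :=
    intervalIntegral.integral_eq_sub_of_hasDerivAt (by rwa [uIcc_of_le hab])
      ((hw.smul hh).intervalIntegrable a b)
  have hint : ∀ φ : ℝ → ℝ, Continuous φ → Integrable φ (volume.restrict (Ioc a b)) :=
    fun φ hφ => (hφ.integrableOn_Icc).mono_set Ioc_subset_Icc_self
  have hnorm : ‖g b - g a‖ ≤ ∫ t in a..b, |w t| * ‖h t‖ := by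
    rw [← hftc]
    refine (intervalIntegral.norm_integral_le_integral_norm hab).trans_eq ?_
    simp only [norm_smul, Real.norm_eq_abs]
  calc ‖g b - g a‖ ^ 2 ≤ (∫ t in a..b, |w t| * ‖h t‖) ^ 2 :=
        pow_le_pow_left₀ (norm_nonneg _) hnorm 2
    _ ≤ (∫ t in a..b, |w t| ^ 2) * ∫ t in a..b, ‖h t‖ ^ 2 := by
        simp only [intervalIntegral.integral_of_le hab]
        exact sq_integral_mul_le_integral_sq_mul_integral_sq (hint _ (by fun_prop))
          (hint _ (by fun_prop)) (hint _ (by fun_prop))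
    _ = (∫ t in a..b, w t ^ 2) * ∫ t in a..b, ‖h t‖ ^ 2 := by simp only [sq_abs]

theorem hasDerivAt_exp_mul_sq_mul {f : ℝ → ℂ} {f' : ℂ} {t : ℝ} (s : ℝ) (hf : HasDerivAt f f' t) :
    HasDerivAt (fun t => (Real.exp (s * t ^ 2 / 2) : ℂ) * f t)
      (Real.exp (s * t ^ 2 / 2) • (f' + s * t * f t)) t := by
  have hexp : HasDerivAt (fun t => Real.exp (s * t ^ 2 / 2))
      (Real.exp (s * t ^ 2 / 2) * (s * t)) t := by
    have := ((hasDerivAt_pow 2 t).const_mul s).div_const 2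
    exact (this.congr_deriv (by ring)).exp
  refine (hexp.ofReal_comp.mul hf).congr_deriv ?_
  rw [Complex.real_smul]
  push_cast
  ring

theorem norm_sq_ofReal_exp_half_mul (r : ℝ) (z : ℂ) :
    ‖(Real.exp (r / 2) : ℂ) * z‖ ^ 2 = Real.exp r * ‖z‖ ^ 2 := by
  rw [norm_mul, Complex.norm_real, Real.norm_of_nonneg (Real.exp_pos _).le, mul_pow,
    Real.exp_half, Real.sq_sqrt (Real.exp_pos _).le]

theorem norm_exp_mul_sub_sq_le (s : ℝ) {f : ℝ → ℂ} (hf : ContDiff ℝ 1 f) {a b : ℝ}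
    (hab : a ≤ b) :
    ‖(Real.exp (s * b ^ 2 / 2) : ℂ) * f b - Real.exp (s * a ^ 2 / 2) * f a‖ ^ 2 ≤
      (∫ t in a..b, Real.exp (s * t ^ 2)) * ∫ t in a..b, ‖deriv f t + s * t * f t‖ ^ 2 := by
  have hdiff := hf.differentiable one_ne_zero
  have hexp_sq : ∀ t : ℝ, Real.exp (s * t ^ 2 / 2) ^ 2 = Real.exp (s * t ^ 2) := fun t => by
    rw [Real.exp_half, Real.sq_sqrt (Real.exp_pos _).le]
  simpa only [hexp_sq] using norm_sub_sq_le_of_hasDerivAt_smul hab (by fun_prop)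
    (by have := hf.continuous_deriv le_rfl; fun_prop)
    (fun t _ => hasDerivAt_exp_mul_sq_mul s (hdiff t).hasDerivAt)

theorem HasCompactSupport.exists_le_eq_zero {E : Type*} [Zero E] [TopologicalSpace E] {f : ℝ → E}
    (hf : HasCompactSupport f) (b : ℝ) : ∃ a ≤ b, f a = 0 := by
  rw [hasCompactSupport_iff_eventuallyEq, coclosedCompact_eq_cocompact] at hf
  obtain ⟨c, hc⟩ := (hf.filter_mono atBot_le_cocompact).exists_forall_of_atBot
  exact ⟨min b c, min_le_left _ _, hc _ (min_le_right _ _)⟩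

theorem Continuous.integrable_norm_sq {X E : Type*} [TopologicalSpace X] [MeasurableSpace X]
    [OpensMeasurableSpace X] {μ : Measure X} [IsFiniteMeasureOnCompacts μ] [NormedAddCommGroup E]
    {g : X → E} (hc : Continuous g) (hs : HasCompactSupport g) :
    Integrable (fun y => ‖g y‖ ^ 2) μ := by
  have hs2 : HasCompactSupport (fun y => ‖g y‖ ^ 2) :=
    hs.norm.comp_left (g := fun r : ℝ => r ^ 2) (zero_pow two_ne_zero)
  exact (hc.norm.pow 2).integrable_of_hasCompactSupport hs2

theorem intervalIntegral_le_integral_of_nonneg {g : ℝ → ℝ} {a b : ℝ} (hab : a ≤ b)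
    (hg : Integrable g) (hg0 : ∀ t, 0 ≤ g t) : ∫ t in a..b, g t ≤ ∫ t, g t := by
  rw [intervalIntegral.integral_of_le hab]
  exact setIntegral_le_integral hg (Eventually.of_forall hg0)

theorem integral_exp_neg_sq_le_one {a : ℝ} (ha : a ≤ -1) :
    ∫ t in a..(-1), Real.exp (-1 * t ^ 2) ≤ 1 :=
  calc ∫ t in a..(-1), Real.exp (-1 * t ^ 2) ≤ ∫ t in a..(-1), Real.exp t := by
        refine intervalIntegral.integral_mono_on ha
          (Continuous.intervalIntegrable (by fun_prop) _ _)
          (Real.continuous_exp.intervalIntegrable _ _) fun t ht => Real.exp_le_exp.2 ?_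
        nlinarith [ht.2]
    _ = Real.exp (-1) - Real.exp a := integral_exp
    _ ≤ 1 := by linarith [Real.exp_le_one_iff.2 (by norm_num : (-1 : ℝ) ≤ 0), Real.exp_pos a]

theorem integral_exp_sq_le {y : ℝ} (hy : y ∈ Icc (-1 : ℝ) 1) :
    ∫ t in (-1)..y, Real.exp (1 * t ^ 2) ≤ 2 * Real.exp 1 :=
  calc ∫ t in (-1)..y, Real.exp (1 * t ^ 2) ≤ ∫ _ in (-1)..y, Real.exp 1 := by
        refine intervalIntegral.integral_mono_on hy.1
          (Continuous.intervalIntegrable (by fun_prop) _ _)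
          intervalIntegrable_const fun t ht => Real.exp_le_exp.2 ?_
        nlinarith [ht.1, ht.2, hy.2]
    _ ≤ 2 * Real.exp 1 := by
        rw [intervalIntegral.integral_const, smul_eq_mul]
        nlinarith [hy.2, Real.exp_pos 1]

theorem norm_sq_le_two_mul_norm_sub_sq_add {E : Type*} [SeminormedAddCommGroup E] (a b : E) :
    ‖a‖ ^ 2 ≤ 2 * (‖a - b‖ ^ 2 + ‖b‖ ^ 2) :=
  (pow_le_pow_left₀ (norm_nonneg a) (norm_le_norm_sub_add a b) 2).trans add_sq_le

theorem norm_le_norm_pow_mul {y : ℝ} (hy : 1 ≤ |y|) (k : ℕ) (z : ℂ) :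
    ‖z‖ ≤ ‖(y : ℂ) ^ k * z‖ := by
  rw [norm_mul, norm_pow, Complex.norm_real, Real.norm_eq_abs]
  exact le_mul_of_one_le_left (norm_nonneg _) (one_le_pow₀ hy)

theorem norm_sq_le_of_one_le_abs {y : ℝ} (hy : 1 ≤ |y|) (k : ℕ) (z d : ℂ) :
    ‖z‖ ^ 2 ≤ (‖(y : ℂ) ^ k * (d - y * z)‖ ^ 2 + ‖d + y * z‖ ^ 2) / 2 := by
  have hv := norm_le_norm_pow_mul hy k (d - y * z)
  have htwo : 2 * |y| * ‖z‖ ≤ ‖d - y * z‖ + ‖d + y * z‖ := by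
    calc 2 * |y| * ‖z‖ = ‖(d + y * z) - (d - y * z)‖ := by
          rw [show (d + y * z) - (d - y * z) = 2 * y * z by ring, norm_mul, norm_mul,
            Complex.norm_real, Complex.norm_ofNat, Real.norm_eq_abs]
      _ ≤ ‖d + y * z‖ + ‖d - y * z‖ := norm_sub_le _ _
      _ = _ := add_comm _ _
  have hz : 2 * ‖z‖ ≤ ‖(y : ℂ) ^ k * (d - y * z)‖ + ‖d + y * z‖ := by
    nlinarith [norm_nonneg z]
  nlinarith [norm_nonneg z, sq_nonneg (‖(y : ℂ) ^ k * (d - y * z)‖ - ‖d + y * z‖)]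

section

variable {f : ℝ → ℂ}

theorem integrable_norm_sq_pow_mul_deriv_sub (hf : ContDiff ℝ 1 f) (hs : HasCompactSupport f)
    (k : ℕ) : Integrable (fun y : ℝ => ‖(y : ℂ) ^ k * (deriv f y - y * f y)‖ ^ 2) := by
  have hcont_deriv := hf.continuous_deriv le_rfl
  have hcont := hf.continuous
  exact Continuous.integrable_norm_sq (by fun_prop) (hs.deriv.sub hs.mul_left).mul_left

theorem integrable_norm_sq_deriv_add (hf : ContDiff ℝ 1 f) (hs : HasCompactSupport f) :
    Integrable (fun y : ℝ => ‖deriv f y + y * f y‖ ^ 2) := by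
  have hcont_deriv := hf.continuous_deriv le_rfl
  have hcont := hf.continuous
  exact Continuous.integrable_norm_sq (by fun_prop) (hs.deriv.add hs.mul_left)

theorem norm_sq_apply_neg_one_le (hf : ContDiff ℝ 1 f) (hs : HasCompactSupport f) (k : ℕ) :
    ‖f (-1)‖ ^ 2 ≤ Real.exp 1 * ∫ y : ℝ, ‖(y : ℂ) ^ k * (deriv f y - y * f y)‖ ^ 2 := by
  obtain ⟨a, ha, hfa⟩ := hs.exists_le_eq_zero (-1)
  have hcont_deriv := hf.continuous_deriv le_rfl
  have hcont := hf.continuous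
  have hv : ∫ t in a..(-1), ‖deriv f t + (-1 : ℝ) * t * f t‖ ^ 2 ≤
      ∫ y : ℝ, ‖(y : ℂ) ^ k * (deriv f y - y * f y)‖ ^ 2 := by
    refine le_trans ?_ (intervalIntegral_le_integral_of_nonneg ha
      (integrable_norm_sq_pow_mul_deriv_sub hf hs k) fun y => by positivity)
    refine intervalIntegral.integral_mono_on ha (Continuous.intervalIntegrable (by fun_prop) _ _)
      (Continuous.intervalIntegrable (by fun_prop) _ _) fun t ht => ?_
    have ht1 : 1 ≤ |t| := by rw [abs_of_neg (by linarith [ht.2])]; linarith [ht.2]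
    have hneg : deriv f t + ((-1 : ℝ) : ℂ) * t * f t = deriv f t - t * f t := by push_cast; ring
    rw [hneg]
    exact pow_le_pow_left₀ (norm_nonneg _) (norm_le_norm_pow_mul ht1 k _) 2
  have hftc := norm_exp_mul_sub_sq_le (-1) hf ha
  rw [hfa, mul_zero, sub_zero, norm_sq_ofReal_exp_half_mul] at hftc
  have hexp : Real.exp 1 * Real.exp (-1 * (-1) ^ 2) = 1 := by
    rw [← Real.exp_add]; norm_num
  have hvnonneg : 0 ≤ ∫ t in a..(-1), ‖deriv f t + (-1 : ℝ) * t * f t‖ ^ 2 :=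
    intervalIntegral.integral_nonneg ha fun _ _ => by positivity
  have hbound := hftc.trans <| (mul_le_mul (integral_exp_neg_sq_le_one ha) hv hvnonneg
    zero_le_one).trans_eq (one_mul _)
  calc ‖f (-1)‖ ^ 2 = Real.exp 1 * (Real.exp (-1 * (-1) ^ 2) * ‖f (-1)‖ ^ 2) := by
        rw [← mul_assoc, hexp, one_mul]
    _ ≤ _ := mul_le_mul_of_nonneg_left hbound (Real.exp_pos 1).le

theorem norm_sq_le_of_mem_Icc (hf : ContDiff ℝ 1 f) (hs : HasCompactSupport f) (k : ℕ) {y : ℝ}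
    (hy : y ∈ Icc (-1 : ℝ) 1) :
    ‖f y‖ ^ 2 ≤ 15 * ((∫ y : ℝ, ‖(y : ℂ) ^ k * (deriv f y - y * f y)‖ ^ 2)
      + ∫ y : ℝ, ‖deriv f y + y * f y‖ ^ 2) := by
  set V := ∫ y : ℝ, ‖(y : ℂ) ^ k * (deriv f y - y * f y)‖ ^ 2
  set U := ∫ y : ℝ, ‖deriv f y + y * f y‖ ^ 2
  have hu : ∫ t in (-1)..y, ‖deriv f t + (1 : ℝ) * t * f t‖ ^ 2 ≤ U := by
    simp only [Complex.ofReal_one, one_mul]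
    exact intervalIntegral_le_integral_of_nonneg hy.1 (integrable_norm_sq_deriv_add hf hs)
      fun t => by positivity
  have hftc := (norm_exp_mul_sub_sq_le 1 hf hy.1).trans (mul_le_mul (integral_exp_sq_le hy) hu
    (intervalIntegral.integral_nonneg hy.1 fun _ _ => by positivity) (by positivity))
  set A := (Real.exp (1 * y ^ 2 / 2) : ℂ) * f y
  set B := (Real.exp (1 * (-1) ^ 2 / 2) : ℂ) * f (-1)
  have hA : ‖f y‖ ^ 2 ≤ ‖A‖ ^ 2 := by
    rw [norm_sq_ofReal_exp_half_mul]
    exact le_mul_of_one_le_left (by positivity) (Real.one_le_exp (by positivity))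
  have hB : ‖B‖ ^ 2 ≤ Real.exp 1 * (Real.exp 1 * V) := by
    rw [norm_sq_ofReal_exp_half_mul, show (1 : ℝ) * (-1) ^ 2 = 1 by norm_num]
    exact mul_le_mul_of_nonneg_left (norm_sq_apply_neg_one_le hf hs k) (Real.exp_pos 1).le
  have hAB := norm_sq_le_two_mul_norm_sub_sq_add A B
  have he : Real.exp 1 ≤ 3 := by linarith [Real.exp_one_lt_d9]
  have hV : 0 ≤ V := integral_nonneg fun _ => by positivity
  have hU : 0 ≤ U := integral_nonneg fun _ => by positivity
  have heU : Real.exp 1 * U ≤ 3 * U := mul_le_mul_of_nonneg_right he hU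
  have heeV : Real.exp 1 * (Real.exp 1 * V) ≤ 7.5 * V := by
    have : Real.exp 1 * Real.exp 1 ≤ 7.5 := by nlinarith [Real.exp_one_lt_d9, Real.exp_pos 1]
    nlinarith
  linarith

theorem integral_norm_sq_le (hf : ContDiff ℝ 1 f) (hs : HasCompactSupport f) (k : ℕ) :
    ∫ y : ℝ, ‖f y‖ ^ 2 ≤ 31 * ((∫ y : ℝ, ‖(y : ℂ) ^ k * (deriv f y - y * f y)‖ ^ 2)
      + ∫ y : ℝ, ‖deriv f y + y * f y‖ ^ 2) := by
  have hV := integrable_norm_sq_pow_mul_deriv_sub hf hs k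
  have hU := integrable_norm_sq_deriv_add hf hs
  have hF : Integrable (fun y => ‖f y‖ ^ 2) := hf.continuous.integrable_norm_sq hs
  have hcenter : ∫ y in Icc (-1 : ℝ) 1, ‖f y‖ ^ 2 ≤ 2 * (15 * ((∫ y : ℝ,
      ‖(y : ℂ) ^ k * (deriv f y - y * f y)‖ ^ 2) + ∫ y : ℝ, ‖deriv f y + y * f y‖ ^ 2)) := by
    refine (setIntegral_mono_on hF.integrableOn (integrableOn_const measure_Icc_lt_top.ne)
      measurableSet_Icc fun y hy => norm_sq_le_of_mem_Icc hf hs k hy).trans_eq ?_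
    rw [setIntegral_const, Real.volume_real_Icc, smul_eq_mul]
    norm_num
  have htail : ∫ y in (Icc (-1 : ℝ) 1)ᶜ, ‖f y‖ ^ 2 ≤ ((∫ y : ℝ,
      ‖(y : ℂ) ^ k * (deriv f y - y * f y)‖ ^ 2) + ∫ y : ℝ, ‖deriv f y + y * f y‖ ^ 2) / 2 := by
    have hsum := (hV.add hU).div_const 2
    calc ∫ y in (Icc (-1 : ℝ) 1)ᶜ, ‖f y‖ ^ 2
        ≤ ∫ y in (Icc (-1 : ℝ) 1)ᶜ, (‖(y : ℂ) ^ k * (deriv f y - y * f y)‖ ^ 2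
            + ‖deriv f y + y * f y‖ ^ 2) / 2 := by
          refine setIntegral_mono_on hF.integrableOn hsum.integrableOn
            measurableSet_Icc.compl fun y hy => norm_sq_le_of_one_le_abs ?_ k (f y) (deriv f y)
          exact not_lt.1 fun h => hy ⟨(abs_lt.1 h).1.le, (abs_lt.1 h).2.le⟩
      _ ≤ ∫ y : ℝ, (‖(y : ℂ) ^ k * (deriv f y - y * f y)‖ ^ 2
            + ‖deriv f y + y * f y‖ ^ 2) / 2 :=
          setIntegral_le_integral hsum (Eventually.of_forall fun _ => by positivity)
      _ = _ := by rw [integral_div, integral_add hV hU]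
  have hnonneg : 0 ≤ (∫ y : ℝ, ‖(y : ℂ) ^ k * (deriv f y - y * f y)‖ ^ 2)
      + ∫ y : ℝ, ‖deriv f y + y * f y‖ ^ 2 :=
    add_nonneg (integral_nonneg fun _ => by positivity) (integral_nonneg fun _ => by positivity)
  rw [← integral_add_compl (s := Icc (-1 : ℝ) 1) measurableSet_Icc hF]
  linarith

end

/-- There is `c > 0` so that for every `τ ≥ 1`, every positive integer `k`, and every
`f ∈ C²_c(ℝ)`, `c τ^{-k} ‖f‖² ≤ τ^{-k} ‖y^k(∂_y - y)f‖² + ‖(∂_y + y)f‖²` in `L²(ℝ)`. -/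
theorem lower_bound_quadratic_form :
    ∃ c : ℝ, 0 < c ∧ ∀ (τ : ℝ), 1 ≤ τ → ∀ (k : ℕ), 1 ≤ k → ∀ f : ℝ → ℂ,
      ContDiff ℝ 2 f → HasCompactSupport f →
      c * τ ^ (-(k : ℤ)) * (∫ y : ℝ, ‖f y‖ ^ 2) ≤
        τ ^ (-(k : ℤ)) * (∫ y : ℝ, ‖(y : ℂ) ^ k * (deriv f y - y * f y)‖ ^ 2)
          + (∫ y : ℝ, ‖deriv f y + y * f y‖ ^ 2) := by
  refine ⟨1 / 31, by norm_num, fun τ hτ k _ f hf hs => ?_⟩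
  have hkey := integral_norm_sq_le (hf.of_le one_le_two) hs k
  set V := ∫ y : ℝ, ‖(y : ℂ) ^ k * (deriv f y - y * f y)‖ ^ 2
  set U := ∫ y : ℝ, ‖deriv f y + y * f y‖ ^ 2
  have hp1 : τ ^ (-(k : ℤ)) ≤ 1 := zpow_le_one_of_nonpos₀ hτ (by simp)
  have hU : 0 ≤ U := integral_nonneg fun _ => by positivity
  calc 1 / 31 * τ ^ (-(k : ℤ)) * ∫ y : ℝ, ‖f y‖ ^ 2
      = τ ^ (-(k : ℤ)) * ((∫ y : ℝ, ‖f y‖ ^ 2) / 31) := by ring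
    _ ≤ τ ^ (-(k : ℤ)) * (V + U) := by gcongr; linarith
    _ ≤ τ ^ (-(k : ℤ)) * V + U := by
        rw [mul_add]; gcongr; exact mul_le_of_le_one_left hU hp1
end

section
/- Let u_τ(x,t,s) = e^{iτt} e^{σ s} ψ(τ^{1/2} x) where σ ≥ 0, τ ≥ 1, and ψ : ℝ → ℂ is a Schwartz function with σ² = τ λ and Q_τ ψ = λ ψ (λ ≥ 0). Then the function u_τ satisfies 𝔏 u_τ = 0 on ℝ³, where 𝔏 = Z₁*Z₁ + Z₂*Z₂ + Z₃*Z₃ with Z₁ = ∂_x - ix∂_t, Z₂ = x^k(∂_x + ix∂_t), Z₃ = ∂_s. -/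
open MeasureTheory

/-- `Z₁ = ∂_x - i x ∂_t` on ℝ³ with coordinates `p = (x,(t,s))`. -/
noncomputable def Z1op (u : ℝ × ℝ × ℝ → ℂ) : ℝ × ℝ × ℝ → ℂ := fun p =>
  fderiv ℝ u p (1, 0, 0) - Complex.I * (p.1 : ℂ) * fderiv ℝ u p (0, 1, 0)

/-- `L = ∂_x + i x ∂_t` on ℝ³. -/
noncomputable def Lop3 (u : ℝ × ℝ × ℝ → ℂ) : ℝ × ℝ × ℝ → ℂ := fun p =>
  fderiv ℝ u p (1, 0, 0) + Complex.I * (p.1 : ℂ) * fderiv ℝ u p (0, 1, 0)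

/-- `Z₂ = x^k (∂_x + i x ∂_t)` on ℝ³. -/
noncomputable def Z2op (k : ℕ) (u : ℝ × ℝ × ℝ → ℂ) : ℝ × ℝ × ℝ → ℂ := fun p =>
  (p.1 : ℂ) ^ k * Lop3 u p

/-- `Z₃ = ∂_s` on ℝ³. -/
noncomputable def Z3op (u : ℝ × ℝ × ℝ → ℂ) : ℝ × ℝ × ℝ → ℂ := fun p =>
  fderiv ℝ u p (0, 0, 1)

/-- `𝔏 = Z₁*Z₁ + Z₂*Z₂ + Z₃*Z₃`, adjoints with respect to Lebesgue measure:
`Z₁* = -L`, `Z₂* = -Z₁ ∘ x^k`, `Z₃* = -∂_s`, so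
`𝔏 u = -L(Z₁u) - Z₁(x^k Z₂ u) - ∂_s² u`. -/
noncomputable def frakL3 (k : ℕ) (u : ℝ × ℝ × ℝ → ℂ) : ℝ × ℝ × ℝ → ℂ := fun p =>
  -(Lop3 (Z1op u) p) - Z1op (fun q => (q.1 : ℂ) ^ k * Z2op k u q) p - Z3op (Z3op u) p

/-- `Q_τ = -(∂_y - y)(∂_y + y) - τ^{-k}(∂_y + y) y^{2k} (∂_y - y)` on ℝ. -/
noncomputable def Qop (k : ℕ) (τ : ℝ) (F : ℝ → ℂ) : ℝ → ℂ := fun y =>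
  -(deriv (fun z => deriv F z + (z : ℂ) * F z) y - (y : ℂ) * (deriv F y + (y : ℂ) * F y))
    - (τ ^ (-(k : ℤ)) : ℝ) *
      (deriv (fun (z : ℝ) => (z : ℂ) ^ (2 * k) * (deriv F z - (z : ℂ) * F z)) y
        + (y : ℂ) * ((y : ℂ) ^ (2 * k) * (deriv F y - (y : ℂ) * F y)))

/-!
Every operator in `𝔏` maps the ansatz `e^{iτt} e^{σs} F(√τ x)` to an ansatz of the same shape:
`Z₁` and `∂_x + i x ∂_t` act on the profile as `√τ (∂_y + y)` and `√τ (∂_y - y)`, `∂_s` as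
multiplication by `σ`, and `x^{2k}` as `τ^{-k} y^{2k}`. Hence `𝔏` acts on the profile as
`τ Q_τ - σ²`, which kills an eigenfunction `Q_τ ψ = λ ψ` as soon as `σ² = τ λ`.
-/

noncomputable section

open Complex

def phase (τ σ : ℝ) (p : ℝ × ℝ × ℝ) : ℂ := exp (I * τ * p.2.1) * (Real.exp (σ * p.2.2) : ℂ)

def separated (τ σ : ℝ) (F : ℝ → ℂ) (p : ℝ × ℝ × ℝ) : ℂ := phase τ σ p * F (Real.sqrt τ * p.1)

def dPlus (F : ℝ → ℂ) : ℝ → ℂ := fun y => deriv F y + y * F y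

def dMinus (F : ℝ → ℂ) : ℝ → ℂ := fun y => deriv F y - y * F y

lemma Qop_eq_dPlus_dMinus (k : ℕ) (τ : ℝ) (F : ℝ → ℂ) (y : ℝ) :
    Qop k τ F y = -dMinus (dPlus F) y
      - (τ ^ (-(k : ℤ)) : ℝ) * dPlus (fun z => (z : ℂ) ^ (2 * k) * dMinus F z) y :=
  rfl

lemma dPlus_const_mul (c : ℂ) (F : ℝ → ℂ) :
    dPlus (fun y => c * F y) = fun y => c * dPlus F y := by
  funext y
  simp only [dPlus, deriv_const_mul_field']
  ring

lemma dMinus_const_mul (c : ℂ) (F : ℝ → ℂ) :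
    dMinus (fun y => c * F y) = fun y => c * dMinus F y := by
  funext y
  simp only [dMinus, deriv_const_mul_field']
  ring

namespace separated

variable {τ σ : ℝ} {F : ℝ → ℂ}

lemma fderiv_apply {p : ℝ × ℝ × ℝ} (hF : DifferentiableAt ℝ F (Real.sqrt τ * p.1))
    (v : ℝ × ℝ × ℝ) :
    fderiv ℝ (separated τ σ F) p v =
      v.1 * Real.sqrt τ * separated τ σ (deriv F) p
        + v.2.1 * (I * τ) * separated τ σ F p + v.2.2 * σ * separated τ σ F p := by
  have ht : HasDerivAt (fun t : ℝ => exp (I * τ * t)) (exp (I * τ * p.2.1) * (I * τ)) p.2.1 := by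
    simpa using ((hasDerivAt_id (p.2.1 : ℂ)).const_mul (I * τ)).cexp.comp_ofReal
  have hs : HasDerivAt (fun s : ℝ => (Real.exp (σ * s) : ℂ))
      ((Real.exp (σ * p.2.2) * σ : ℝ) : ℂ) p.2.2 := by
    simpa using (((hasDerivAt_id p.2.2).const_mul σ).exp).ofReal_comp
  have hx : HasDerivAt (fun x : ℝ => F (Real.sqrt τ * x)) (Real.sqrt τ * deriv F (Real.sqrt τ * p.1))
      p.1 := by
    simpa [Function.comp_def, Complex.real_smul] using
      hF.hasDerivAt.scomp p.1 ((hasDerivAt_id p.1).const_mul (Real.sqrt τ))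
  have hsep : HasFDerivAt (separated τ σ F) _ p :=
    ((ht.hasFDerivAt.comp p hasFDerivAt_snd.fst).mul
      (hs.hasFDerivAt.comp p hasFDerivAt_snd.snd)).mul (hx.hasFDerivAt.comp p hasFDerivAt_fst)
  rw [hsep.fderiv]
  simp only [Pi.mul_apply, add_apply, smul_apply, ContinuousLinearMap.comp_apply,
    ContinuousLinearMap.coe_fst', ContinuousLinearMap.coe_snd', ContinuousLinearMap.toSpanSingleton_apply, smul_eq_mul,
    real_smul, ofReal_mul, separated, phase]
  ring

lemma Z1op_eq (hτ : 0 ≤ τ) (hF : Differentiable ℝ F) :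
    Z1op (separated τ σ F) = separated τ σ (fun y => Real.sqrt τ * dPlus F y) := by
  funext p
  have hsqrt : (Real.sqrt τ : ℂ) * Real.sqrt τ = τ := by exact_mod_cast Real.mul_self_sqrt hτ
  simp only [Z1op, fderiv_apply (hF _), separated, dPlus, ofReal_mul, ofReal_one, ofReal_zero]
  linear_combination (phase τ σ p * F (Real.sqrt τ * p.1) * p.1) * (-τ * I_mul_I - hsqrt)

lemma Lop3_eq (hτ : 0 ≤ τ) (hF : Differentiable ℝ F) :
    Lop3 (separated τ σ F) = separated τ σ (fun y => Real.sqrt τ * dMinus F y) := by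
  funext p
  have hsqrt : (Real.sqrt τ : ℂ) * Real.sqrt τ = τ := by exact_mod_cast Real.mul_self_sqrt hτ
  simp only [Lop3, fderiv_apply (hF _), separated, dMinus, ofReal_mul, ofReal_one, ofReal_zero]
  linear_combination (phase τ σ p * F (Real.sqrt τ * p.1) * p.1) * (τ * I_mul_I + hsqrt)

lemma Z3op_eq (hF : Differentiable ℝ F) :
    Z3op (separated τ σ F) = separated τ σ (fun y => σ * F y) := by
  funext p
  simp only [Z3op, fderiv_apply (hF _), separated, ofReal_one, ofReal_zero]
  ring

lemma coord_pow_mul_eq (hτ : 0 < τ) (m : ℕ) :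
    (fun p : ℝ × ℝ × ℝ => (p.1 : ℂ) ^ (2 * m) * separated τ σ F p)
      = separated τ σ (fun y => (τ ^ (-(m : ℤ)) : ℝ) * (y : ℂ) ^ (2 * m) * F y) := by
  funext p
  have hpow : ((τ ^ (-(m : ℤ)) : ℝ) : ℂ) * (Real.sqrt τ : ℂ) ^ (2 * m) = 1 := by
    rw [pow_mul, ← ofReal_pow, Real.sq_sqrt hτ.le, ← ofReal_pow, ← ofReal_mul, zpow_neg,
      zpow_natCast, inv_mul_cancel₀ (pow_ne_zero _ hτ.ne'), ofReal_one]
  simp only [separated, ofReal_mul]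
  linear_combination (-(phase τ σ p * F (Real.sqrt τ * p.1) * (p.1 : ℂ) ^ (2 * m))) * hpow

lemma frakL3_eq (k : ℕ) (hτ : 0 < τ) (hF : ContDiff ℝ 2 F) :
    frakL3 k (separated τ σ F) = separated τ σ (fun y => τ * Qop k τ F y - σ ^ 2 * F y) := by
  have hF₁ : Differentiable ℝ F := hF.differentiable two_ne_zero
  have hF₂ : Differentiable ℝ (deriv F) :=
    (contDiff_succ_iff_deriv.mp hF).2.2.differentiable one_ne_zero
  have hy : Differentiable ℝ (fun y : ℝ => (y : ℂ)) := ofRealCLM.differentiable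
  have hdPlus : Differentiable ℝ (dPlus F) := hF₂.add (hy.mul hF₁)
  have hweighted : Differentiable ℝ (fun y : ℝ => (y : ℂ) ^ (2 * k) * dMinus F y) :=
    (hy.pow _).mul (hF₂.sub (hy.mul hF₁))
  have hsqrt : (Real.sqrt τ : ℂ) * Real.sqrt τ = τ := by exact_mod_cast Real.mul_self_sqrt hτ.le
  have hZ2 : (fun q : ℝ × ℝ × ℝ => (q.1 : ℂ) ^ k * Z2op k (separated τ σ F) q)
      = separated τ σ (fun y => ((τ ^ (-(k : ℤ)) : ℝ) * Real.sqrt τ : ℂ)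
          * ((y : ℂ) ^ (2 * k) * dMinus F y)) := by
    calc _ = fun q : ℝ × ℝ × ℝ => (q.1 : ℂ) ^ (2 * k)
          * separated τ σ (fun y => Real.sqrt τ * dMinus F y) q := by
          funext q
          simp only [Z2op, Lop3_eq hτ.le hF₁]
          ring
      _ = _ := by
          rw [coord_pow_mul_eq hτ]
          congr 1
          funext y
          ring
  funext p
  simp only [frakL3]
  rw [hZ2, Z1op_eq hτ.le (hweighted.const_mul _), Z1op_eq hτ.le hF₁,
    Lop3_eq hτ.le (hdPlus.const_mul _), Z3op_eq hF₁, Z3op_eq (hF₁.const_mul _),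
    dPlus_const_mul, dMinus_const_mul]
  simp only [separated, Qop_eq_dPlus_dMinus]
  linear_combination (-(phase τ σ p * (dMinus (dPlus F) (Real.sqrt τ * p.1)
    + (τ ^ (-(k : ℤ)) : ℝ) * dPlus (fun z => (z : ℂ) ^ (2 * k) * dMinus F z)
      (Real.sqrt τ * p.1)))) * hsqrt

end separated

end

theorem null_solution_general (k : ℕ) (τ : ℝ) (hτ : 1 ≤ τ)
    (lamv σ : ℝ) (hσ2 : σ ^ 2 = τ * lamv)
    (ψ : SchwartzMap ℝ ℂ) (heig : ∀ y : ℝ, Qop k τ (fun x => ψ x) y = lamv * ψ y)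
    (u : ℝ × ℝ × ℝ → ℂ)
    (hu : ∀ p : ℝ × ℝ × ℝ, u p = Complex.exp (Complex.I * τ * p.2.1)
        * (Real.exp (σ * p.2.2) : ℂ) * ψ (Real.sqrt τ * p.1)) :
    ∀ p : ℝ × ℝ × ℝ, frakL3 k u p = 0 := by
  have hu_sep : u = separated τ σ (fun x => ψ x) := funext hu
  have hσ2' : (σ : ℂ) ^ 2 = τ * lamv := by exact_mod_cast hσ2
  intro p
  rw [hu_sep, separated.frakL3_eq k (by linarith) (ψ.smooth 2)]
  simp only [separated, heig]
  linear_combination (-(phase τ σ p * ψ (Real.sqrt τ * p.1))) * hσ2'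

/-- If `ψ` is a Schwartz eigenfunction `Q_τ ψ = λ ψ` and `σ² = τλ`, then
`u(x,t,s) = e^{iτt} e^{σs} ψ(τ^{1/2} x)` solves `𝔏 u = 0` on ℝ³. -/
theorem null_solution (k : ℕ) (hk : 1 ≤ k) (τ : ℝ) (hτ : 1 ≤ τ)
    (lamv σ : ℝ) (hlam : 0 ≤ lamv) (hσ : 0 ≤ σ) (hσ2 : σ ^ 2 = τ * lamv)
    (ψ : SchwartzMap ℝ ℂ) (heig : ∀ y : ℝ, Qop k τ (fun x => ψ x) y = lamv * ψ y)
    (u : ℝ × ℝ × ℝ → ℂ)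
    (hu : ∀ p : ℝ × ℝ × ℝ, u p = Complex.exp (Complex.I * τ * p.2.1)
        * (Real.exp (σ * p.2.2) : ℂ) * ψ (Real.sqrt τ * p.1)) :
    ∀ p : ℝ × ℝ × ℝ, frakL3 k u p = 0 :=
  null_solution_general k τ hτ lamv σ hσ2 ψ heig u hu
end
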